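/- Let V be a finite-dimensional vector space of dimension n over a field K, and let f be a regular nilpotent endomorphism of V (f^n = 0 and f^(n-1) ≠ 0). Then there exists exactly one complete flag 0 = D_0 ⊆ D_1 ⊆ ⋯ ⊆ D_n = V (with dim D_l = l) satisfying f(D_l) ⊆ D_{l-1} for all l = 1, …, n. -/

import Mathlib

/-!
The flag is `D_l = ker f^l`. The kernels of the powers of `f` increase strictly up to
`ker f^n = V`, since one repetition would make the chain constant from there on and force
`f^(n-1) = 0`; hence `dim ker f^l = l`. Conversely, any compatible flag satisfies
`f^l (D_l) = 0`, i.e. `D_l ≤ ker f^l`, and the dimensions agree.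
-/

open LinearMap Module

namespace Module.End

section Semiring

variable {R M : Type*} [Semiring R] [AddCommMonoid M] [Module R M] (f : End R M)

theorem mem_ker_pow_succ_iff {m : ℕ} {x : M} : x ∈ ker (f ^ (m + 1)) ↔ f x ∈ ker (f ^ m) := by
  rw [mem_ker, mem_ker, pow_succ, mul_apply]

theorem ker_pow_le_ker_pow_succ (m : ℕ) : ker (f ^ m) ≤ ker (f ^ (m + 1)) := by
  rw [pow_succ', mul_eq_comp]
  exact ker_le_ker_comp _ _

theorem map_ker_pow_succ_le (m : ℕ) : (ker (f ^ (m + 1))).map f ≤ ker (f ^ m) := by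
  rintro _ ⟨x, hx, rfl⟩
  exact (mem_ker_pow_succ_iff f).mp hx

theorem le_ker_pow_of_map_le {n : ℕ} {D : Fin (n + 1) → Submodule R M} (h0 : D 0 = ⊥)
    (hD : ∀ l : Fin n, (D l.succ).map f ≤ D l.castSucc) (l : Fin (n + 1)) :
    D l ≤ ker (f ^ (l : ℕ)) := by
  induction l using Fin.induction with
  | zero => simp [h0]
  | succ l ih => exact fun x hx => (mem_ker_pow_succ_iff f).mpr (ih (hD l ⟨x, hx, rfl⟩))

end Semiring

section DivisionRing

variable {K V : Type*} [DivisionRing K] [AddCommGroup V] [Module K V] {f : End K V}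

theorem ker_pow_lt_ker_pow_succ {k m : ℕ} (hm : m ≤ k) (hk : f ^ (k + 1) = 0)
    (hk' : f ^ k ≠ 0) : ker (f ^ m) < ker (f ^ (m + 1)) := by
  refine (ker_pow_le_ker_pow_succ f m).lt_of_ne fun h => hk' ?_
  obtain ⟨j, rfl⟩ := Nat.exists_eq_add_of_le hm
  have : ker (f ^ (m + j)) = ker (f ^ (m + j + 1)) :=
    (ker_pow_constant h j).symm.trans (ker_pow_constant h (j + 1))
  rw [← ker_eq_top, this, hk, ker_zero]

variable [FiniteDimensional K V]

theorem finrank_ker_pow_add_le {k m j : ℕ} (hmj : m + j ≤ k + 1) (hk : f ^ (k + 1) = 0)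
    (hk' : f ^ k ≠ 0) : finrank K (ker (f ^ m)) + j ≤ finrank K (ker (f ^ (m + j))) := by
  induction j with
  | zero => rfl
  | succ j ih =>
    have step := Submodule.finrank_lt_finrank_of_lt
      (ker_pow_lt_ker_pow_succ (show m + j ≤ k by omega) hk hk')
    have := ih (by omega)
    rw [← add_assoc m j 1]
    omega

theorem finrank_ker_pow {k m : ℕ} (hV : finrank K V = k + 1) (hk : f ^ (k + 1) = 0)
    (hk' : f ^ k ≠ 0) (hm : m ≤ k + 1) : finrank K (ker (f ^ m)) = m := by
  have lower := finrank_ker_pow_add_le (m := 0) (j := m) (by omega) hk hk'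
  have upper := finrank_ker_pow_add_le (m := m) (j := k + 1 - m) (by omega) hk hk'
  rw [zero_add] at lower
  rw [Nat.add_sub_cancel' hm, hk, ker_zero, finrank_top, hV] at upper
  omega

end DivisionRing

end Module.End

open Module.End in
/-- If `f` is a regular nilpotent endomorphism of an `n`-dimensional vector space `V`
(`f ^ n = 0` and `f ^ (n-1) ≠ 0`), then there exists exactly one complete flag
`0 = D_0 ⊆ D_1 ⊆ ⋯ ⊆ D_n = V` (with `dim D_l = l`) satisfying `f (D_l) ⊆ D_{l-1}`
for all `l = 1, …, n`. -/
theorem regular_nilpotent_existsUnique_flag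
    {K V : Type*} [Field K] [AddCommGroup V] [Module K V] [FiniteDimensional K V]
    {n : ℕ} (hn : Module.finrank K V = n)
    (f : V →ₗ[K] V) (hfn : f ^ n = 0) (hfn1 : f ^ (n - 1) ≠ 0) :
    ∃! D : Fin (n + 1) → Submodule K V,
      D 0 = ⊥ ∧ D (Fin.last n) = ⊤ ∧
      (∀ l : Fin (n + 1), Module.finrank K (D l) = (l : ℕ)) ∧
      (∀ l : Fin n, D l.castSucc ≤ D l.succ) ∧
      (∀ l : Fin n, Submodule.map f (D l.succ) ≤ D l.castSucc) := by
  obtain ⟨k, rfl⟩ : ∃ k, n = k + 1 :=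
    Nat.exists_eq_succ_of_ne_zero (by rintro rfl; exact hfn1 hfn)
  rw [Nat.add_sub_cancel] at hfn1
  have hrank (l : Fin (k + 2)) : finrank K (ker (f ^ (l : ℕ))) = l :=
    finrank_ker_pow hn hfn hfn1 l.is_le
  refine ⟨fun l => ker (f ^ (l : ℕ)), ⟨by simp [one_eq_id], by simp [hfn], hrank,
    fun l => ker_pow_le_ker_pow_succ f l, fun l => map_ker_pow_succ_le f l⟩, ?_⟩
  rintro D ⟨h0, -, hD, -, hmap⟩
  funext l
  exact Submodule.eq_of_le_of_finrank_eq (le_ker_pow_of_map_le f h0 hmap l) (by rw [hD, hrank])
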